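/- Let R = Hom(ℚ/ℤ, ℚ/ℤ) and G = {(r, ρ) ∈ ℚ₊ˣ × R : rρ ∈ R}. The map η(r, ρ) := ((r⁻¹ℤ, r⁻¹(rρ)), (ℤ, ρ)) sends every element of G to a pair of commensurable 1-dimensional ℚ-lattices, and it induces a bijection from G onto the quotient of the set of all pairs of commensurable 1-dimensional ℚ-lattices by the scaling action of ℝ₊ˣ. -/

import Mathlib

/-- The abelian group `ℚ/ℤ`;  `R := Hom(ℚ/ℤ, ℚ/ℤ)` is then `QZ →+ QZ`. -/
abbrev QZ : Type := ℚ ⧸ AddSubgroup.zmultiples (1 : ℚ)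

/-- For `λ ∈ ℝ`, the homomorphism `ℚ/ℤ → ℝ/λℤ` induced by `q ↦ λ·q`; for
`ρ : ℚ/ℤ → ℚ/ℤ` the `ℚ`-lattice `(λℤ, λρ)` has homomorphism `(scaleHom λ).comp ρ`,
i.e. `x ↦ λ·q + λℤ` where `q` is any rational representative of `ρ(x)`. -/
noncomputable def scaleHom (l : ℝ) : QZ →+ ℝ ⧸ AddSubgroup.zmultiples l :=
  QuotientAddGroup.map (AddSubgroup.zmultiples (1 : ℚ)) (AddSubgroup.zmultiples l)
    ((AddMonoidHom.mulLeft l).comp (Rat.castHom ℝ).toAddMonoidHom)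
    (by
      intro q hq
      obtain ⟨n, rfl⟩ := AddSubgroup.mem_zmultiples_iff.mp hq
      refine AddSubgroup.mem_comap.mpr (AddSubgroup.mem_zmultiples_iff.mpr ⟨n, ?_⟩)
      simp only [AddMonoidHom.comp_apply, RingHom.toAddMonoidHom_eq_coe,
        AddMonoidHom.coe_coe, AddMonoidHom.coe_mulLeft, zsmul_eq_mul]
      rw [mul_one, map_intCast]
      ring)

/-- A pair `(Λ, φ)` with `Λ` a subgroup of `ℝ` and `φ : ℚ/ℤ → ℝ/Λ` a homomorphism. -/
def PreQLat : Type := Σ Λ : AddSubgroup ℝ, QZ →+ ℝ ⧸ Λ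

/-- `(Λ, φ)` is a 1-dimensional `ℚ`-lattice: `Λ` is the `ℤ`-span of a nonzero real number
and the image of `φ` lies in `ℚΛ/Λ`. -/
def IsQLat (L : PreQLat) : Prop :=
  (∃ l : ℝ, l ≠ 0 ∧ L.1 = AddSubgroup.zmultiples l) ∧
  ∀ x : QZ,
    L.2 x ∈ (Submodule.span ℚ (L.1 : Set ℝ)).toAddSubgroup.map (QuotientAddGroup.mk' L.1)

/-- Commensurability: `ℚΛ₁ = ℚΛ₂` and `(φ₁ - φ₂)(x) ∈ Λ₁ + Λ₂` for all `x ∈ ℚ/ℤ`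
(the images of `φ₁(x)` and `φ₂(x)` in `ℝ/(Λ₁ + Λ₂)` coincide). -/
def Commensurable1 (L₁ L₂ : PreQLat) : Prop :=
  Submodule.span ℚ (L₁.1 : Set ℝ) = Submodule.span ℚ (L₂.1 : Set ℝ) ∧
  ∀ x : QZ,
    QuotientAddGroup.map L₁.1 (L₁.1 ⊔ L₂.1) (AddMonoidHom.id ℝ)
      (by rw [AddSubgroup.comap_id]; exact le_sup_left) (L₁.2 x) =
    QuotientAddGroup.map L₂.1 (L₁.1 ⊔ L₂.1) (AddMonoidHom.id ℝ)
      (by rw [AddSubgroup.comap_id]; exact le_sup_right) (L₂.2 x)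

/-- `ScaleRel c L L'` says that `L' = c·L = (cΛ, cφ)` is the scaling of `L` by `c`. -/
def ScaleRel (c : ℝ) (L L' : PreQLat) : Prop :=
  L'.1 = L.1.map (AddMonoidHom.mulLeft c) ∧
  ∃ h : L.1 ≤ L'.1.comap (AddMonoidHom.mulLeft c),
    ∀ x : QZ, L'.2 x = QuotientAddGroup.map L.1 L'.1 (AddMonoidHom.mulLeft c) h (L.2 x)

/-- For `r ∈ ℚ₊ˣ` (in lowest terms `r = num/den`) and `ρ ∈ R = Hom(ℚ/ℤ, ℚ/ℤ)`, the
condition `rρ ∈ R` with value `rρ`: `ρ = den·τ` and `rρ = num·τ` for some `τ ∈ R`. -/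
def IsRatSMul (r : ℚ) (ρ rρ : QZ →+ QZ) : Prop :=
  ∃ τ : QZ →+ QZ, ρ = r.den • τ ∧ rρ = r.num • τ

/-- The first member `(r⁻¹ℤ, r⁻¹(rρ))` of `η(r, ρ)`. -/
noncomputable def eta1 (r : ℚ) (rρ : QZ →+ QZ) : PreQLat :=
  ⟨AddSubgroup.zmultiples ((r : ℝ)⁻¹), (scaleHom ((r : ℝ)⁻¹)).comp rρ⟩

/-- The second member `(ℤ, ρ)` of `η(r, ρ)`. -/
noncomputable def eta2 (ρ : QZ →+ QZ) : PreQLat :=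
  ⟨AddSubgroup.zmultiples (1 : ℝ), (scaleHom 1).comp ρ⟩

/-!
Every 1-dimensional `ℚ`-lattice is `(lℤ, lσ)` for a unique `l > 0` and a unique `σ ∈ R`, because
`q ↦ l·q` embeds `ℚ/ℤ` into `ℝ/lℤ` with image `ℚl/lℤ`. Two such lattices `(l₁, σ₁)`, `(l₂, σ₂)`
have the same `ℚ`-span exactly when `l₁ = r⁻¹ l₂` for a rational `r > 0`; writing `r = a/b` in
lowest terms, `r⁻¹l₂ℤ + l₂ℤ = (l₂/a)ℤ`, so commensurability says `b·σ₁ = a·σ₂`, and by coprimality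
this means `σ₂ = b·τ`, `σ₁ = a·τ`, i.e. `σ₁ = rσ₂`. Scaling by `l₂⁻¹` moves the pair to
`η(r, σ₂)`, and `ℤ` is fixed by no positive scaling other than `1`, which gives injectivity.
-/

open AddSubgroup

theorem AddSubgroup.zmultiples_zsmul_sup_zmultiples_zsmul {M : Type*} [AddCommGroup M]
    {a b : ℤ} (hab : IsCoprime a b) (x : M) :
    zmultiples (a • x) ⊔ zmultiples (b • x) = zmultiples x := by
  obtain ⟨u, v, huv⟩ := hab
  refine le_antisymm (sup_le ?_ ?_) (zmultiples_le.2 ?_)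
  · exact zmultiples_le.2 (zsmul_mem (mem_zmultiples x) a)
  · exact zmultiples_le.2 (zsmul_mem (mem_zmultiples x) b)
  · have hx : x = u • (a • x) + v • (b • x) := by
      rw [smul_smul, smul_smul, ← add_smul, huv, one_smul]
    have hmem := add_mem (zsmul_mem (mem_sup_left (mem_zmultiples (a • x))) u)
      (zsmul_mem (mem_sup_right (mem_zmultiples (b • x))) v)
    rwa [← hx] at hmem

theorem exists_zsmul_eq_of_zsmul_eq {M : Type*} [AddCommGroup M] {a b : ℤ} (hab : IsCoprime a b)
    {x y : M} (h : a • x = b • y) : ∃ z : M, x = b • z ∧ y = a • z := by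
  obtain ⟨u, v, huv⟩ := hab
  refine ⟨u • y + v • x, ?_, ?_⟩
  · linear_combination (norm := module) u • h - huv • x
  · linear_combination (norm := module) -v • h - huv • y

theorem AddMonoidHom.exists_comp_eq_of_range_le {A B C : Type*} [AddGroup A] [AddGroup B]
    [AddGroup C] {f : B →+ C} (hf : Function.Injective f) {g : A →+ C} (h : g.range ≤ f.range) :
    ∃ k : A →+ B, f.comp k = g := by
  refine ⟨(AddMonoidHom.ofInjective hf).symm.toAddMonoidHom.comp
    (g.codRestrict f.range fun x ↦ h ⟨x, rfl⟩), AddMonoidHom.ext fun x ↦ ?_⟩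
  simp

theorem Rat.isCoprime_den_num (r : ℚ) : IsCoprime (r.den : ℤ) r.num := by
  rw [Int.isCoprime_iff_gcd_eq_one, Int.gcd_comm]
  exact r.reduced

theorem Real.eq_of_zmultiples_eq {a b : ℝ} (ha : 0 < a) (hb : 0 < b)
    (h : zmultiples a = zmultiples b) : a = b := by
  rcases (zmultiples_eq_zmultiples_iff (not_isOfFinAddOrder_of_isAddTorsionFree ha.ne')).1 h
    with hab | hab
  · exact hab
  · linarith

theorem ratCast_mul_mem_zmultiples_iff {K : Type*} [Field K] [CharZero K] {m : K} (hm : m ≠ 0)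
    (t : ℚ) : (t : K) * m ∈ zmultiples m ↔ t ∈ zmultiples (1 : ℚ) := by
  simp only [mem_zmultiples_iff, zsmul_eq_mul, mul_one, mul_left_inj' hm]
  exact exists_congr fun k ↦ by exact_mod_cast Iff.rfl

theorem Real.span_rat_zmultiples (l : ℝ) :
    Submodule.span ℚ (zmultiples l : Set ℝ) = Submodule.span ℚ {l} := by
  rw [← Submodule.span_singleton_toAddSubgroup_eq_zmultiples, Submodule.coe_toAddSubgroup,
    Submodule.span_span_of_tower]

theorem Real.mem_span_rat_zmultiples_iff {l x : ℝ} :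
    x ∈ Submodule.span ℚ (zmultiples l : Set ℝ) ↔ ∃ q : ℚ, (q : ℝ) * l = x := by
  simp only [span_rat_zmultiples, Submodule.mem_span_singleton, Rat.smul_def]

theorem Real.exists_rat_eq_inv_mul_of_span_eq {l₁ l₂ : ℝ} (hl₁ : 0 < l₁) (hl₂ : 0 < l₂)
    (h : Submodule.span ℚ (zmultiples l₁ : Set ℝ) = Submodule.span ℚ (zmultiples l₂ : Set ℝ)) :
    ∃ r : ℚ, 0 < r ∧ l₁ = (r : ℝ)⁻¹ * l₂ := by
  have hl₁_mem : l₁ ∈ Submodule.span ℚ (zmultiples l₂ : Set ℝ) :=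
    h ▸ Submodule.subset_span (mem_zmultiples l₁)
  obtain ⟨s, rfl⟩ := mem_span_rat_zmultiples_iff.1 hl₁_mem
  have hs : 0 < s := by exact_mod_cast pos_of_mul_pos_left hl₁ hl₂.le
  exact ⟨s⁻¹, inv_pos.2 hs, by push_cast; rw [inv_inv]⟩

theorem Rat.inv_cast_eq_den_mul_inv_num {K : Type*} [DivisionRing K] (r : ℚ) :
    (r : K)⁻¹ = r.den * (r.num : K)⁻¹ := by
  rw [Rat.cast_def, inv_div, div_eq_mul_inv]

theorem Real.zmultiples_inv_ratCast_mul_sup_zmultiples {r : ℚ} (hr : r ≠ 0) (l : ℝ) :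
    zmultiples ((r : ℝ)⁻¹ * l) ⊔ zmultiples l = zmultiples ((r.num : ℝ)⁻¹ * l) := by
  have hnum : (r.num : ℝ) ≠ 0 := by exact_mod_cast Rat.num_ne_zero.2 hr
  have hden : (r.den : ℤ) • ((r.num : ℝ)⁻¹ * l) = (r : ℝ)⁻¹ * l := by
    rw [zsmul_eq_mul, Rat.inv_cast_eq_den_mul_inv_num]; push_cast; ring
  have hnum_smul : r.num • ((r.num : ℝ)⁻¹ * l) = l := by
    rw [zsmul_eq_mul, ← mul_assoc, mul_inv_cancel₀ hnum, one_mul]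
  simpa only [hden, hnum_smul] using
    zmultiples_zsmul_sup_zmultiples_zsmul r.isCoprime_den_num ((r.num : ℝ)⁻¹ * l)

theorem Real.span_rat_zmultiples_ratCast_mul {q : ℚ} (hq : q ≠ 0) (l : ℝ) :
    Submodule.span ℚ (zmultiples ((q : ℝ) * l) : Set ℝ) =
      Submodule.span ℚ (zmultiples l : Set ℝ) := by
  rw [span_rat_zmultiples, span_rat_zmultiples, ← Rat.smul_def,
    Submodule.span_singleton_smul_eq (isUnit_iff_ne_zero.2 hq)]

theorem scaleHom_mk (l : ℝ) (q : ℚ) : scaleHom l q = ((l * q : ℝ) : ℝ ⧸ zmultiples l) := rfl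

theorem scaleHom_injective {l : ℝ} (hl : l ≠ 0) : Function.Injective (scaleHom l) := by
  refine (injective_iff_map_eq_zero _).2 fun x hx ↦ ?_
  induction x using QuotientAddGroup.induction_on with | H q => ?_
  rw [scaleHom_mk, QuotientAddGroup.eq_zero_iff, mul_comm,
    ratCast_mul_mem_zmultiples_iff hl] at hx
  exact (QuotientAddGroup.eq_zero_iff q).2 hx

theorem range_scaleHom (l : ℝ) : (scaleHom l).range =
    (Submodule.span ℚ (zmultiples l : Set ℝ)).toAddSubgroup.map (QuotientAddGroup.mk' _) := by
  ext y
  simp only [AddMonoidHom.mem_range, AddSubgroup.mem_map, Submodule.mem_toAddSubgroup,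
    Real.mem_span_rat_zmultiples_iff]
  constructor
  · rintro ⟨x, rfl⟩
    induction x using QuotientAddGroup.induction_on with | H q => ?_
    exact ⟨_, ⟨q, mul_comm _ _⟩, rfl⟩
  · rintro ⟨_, ⟨q, rfl⟩, rfl⟩
    exact ⟨q, by rw [scaleHom_mk, mul_comm]; rfl⟩

theorem map_mulLeft_scaleHom (c l : ℝ) (h : zmultiples l ≤ (zmultiples (c * l)).comap
    (AddMonoidHom.mulLeft c)) (x : QZ) :
    QuotientAddGroup.map _ _ (AddMonoidHom.mulLeft c) h (scaleHom l x) = scaleHom (c * l) x := by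
  induction x using QuotientAddGroup.induction_on with | H q => ?_
  rw [scaleHom_mk, scaleHom_mk, QuotientAddGroup.map_mk, AddMonoidHom.coe_mulLeft, mul_assoc]

noncomputable def PreQLat.scaled (l : ℝ) (σ : QZ →+ QZ) : PreQLat :=
  ⟨zmultiples l, (scaleHom l).comp σ⟩

theorem isQLat_scaled {l : ℝ} (hl : l ≠ 0) (σ : QZ →+ QZ) : IsQLat (PreQLat.scaled l σ) :=
  ⟨⟨l, hl, rfl⟩, fun x ↦ range_scaleHom l ▸ ⟨σ x, rfl⟩⟩

theorem IsQLat.exists_eq_scaled {L : PreQLat} (h : IsQLat L) :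
    ∃ l : ℝ, 0 < l ∧ ∃ σ : QZ →+ QZ, L = PreQLat.scaled l σ := by
  obtain ⟨Λ, φ⟩ := L
  obtain ⟨⟨l, hl, hΛ⟩, hφ⟩ := h
  change Λ = zmultiples l at hΛ
  rw [← zmultiples_abs] at hΛ
  subst hΛ
  have hrange : φ.range ≤ (scaleHom |l|).range := by
    rintro _ ⟨x, rfl⟩
    exact range_scaleHom |l| ▸ hφ x
  obtain ⟨σ, rfl⟩ :=
    AddMonoidHom.exists_comp_eq_of_range_le (scaleHom_injective (abs_ne_zero.2 hl)) hrange
  exact ⟨|l|, abs_pos.2 hl, σ, rfl⟩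

theorem scaleRel_scaled (c l : ℝ) (σ : QZ →+ QZ) :
    ScaleRel c (PreQLat.scaled l σ) (PreQLat.scaled (c * l) σ) := by
  have hmap : (zmultiples l).map (AddMonoidHom.mulLeft c) = zmultiples (c * l) :=
    AddMonoidHom.map_zmultiples _ _
  exact ⟨hmap.symm, map_le_iff_le_comap.1 hmap.le,
    fun x ↦ (map_mulLeft_scaleHom c l _ (σ x)).symm⟩

theorem ScaleRel.scaled_eq {c l l' : ℝ} (hcl : 0 < c * l) (hl' : 0 < l') {σ σ' : QZ →+ QZ}
    (h : ScaleRel c (PreQLat.scaled l σ) (PreQLat.scaled l' σ')) : l' = c * l ∧ σ' = σ := by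
  obtain ⟨hΛ, hle, hφ⟩ := h
  obtain rfl : l' = c * l :=
    Real.eq_of_zmultiples_eq hl' hcl (hΛ.trans (AddMonoidHom.map_zmultiples _ _))
  refine ⟨rfl, AddMonoidHom.ext fun x ↦ scaleHom_injective hcl.ne' ?_⟩
  exact (hφ x).trans (map_mulLeft_scaleHom c l hle (σ x))

theorem commensurable1_apply_iff (L₁ L₂ : PreQLat) (x : QZ) {a b : ℝ}
    (ha : (a : ℝ ⧸ L₁.1) = L₁.2 x) (hb : (b : ℝ ⧸ L₂.1) = L₂.2 x) :
    QuotientAddGroup.map L₁.1 (L₁.1 ⊔ L₂.1) (AddMonoidHom.id ℝ)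
        (by rw [AddSubgroup.comap_id]; exact le_sup_left) (L₁.2 x) =
      QuotientAddGroup.map L₂.1 (L₁.1 ⊔ L₂.1) (AddMonoidHom.id ℝ)
        (by rw [AddSubgroup.comap_id]; exact le_sup_right) (L₂.2 x) ↔
      -a + b ∈ L₁.1 ⊔ L₂.1 := by
  rw [← ha, ← hb, QuotientAddGroup.map_mk, QuotientAddGroup.map_mk, QuotientAddGroup.eq]
  rfl

theorem commensurable_scaled_iff {l : ℝ} (hl : l ≠ 0) {r : ℚ} (hr : r ≠ 0) {σ₁ σ₂ : QZ →+ QZ} :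
    Commensurable1 (PreQLat.scaled ((r : ℝ)⁻¹ * l) σ₁) (PreQLat.scaled l σ₂) ↔
      (r.den : ℤ) • σ₁ = r.num • σ₂ := by
  have hnum : (r.num : ℝ) ≠ 0 := by exact_mod_cast Rat.num_ne_zero.2 hr
  have hspan := Real.span_rat_zmultiples_ratCast_mul (inv_ne_zero hr) l
  rw [Rat.cast_inv] at hspan
  refine (and_iff_right hspan).trans ((forall_congr' fun x ↦ ?_).trans AddMonoidHom.ext_iff.symm)
  obtain ⟨q, hq⟩ := QuotientAddGroup.mk_surjective (σ₁ x)
  obtain ⟨p, hp⟩ := QuotientAddGroup.mk_surjective (σ₂ x)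
  have hdiff : -((r : ℝ)⁻¹ * l * q) + l * p =
      ((-(r.den * q) + r.num * p : ℚ) : ℝ) * ((r.num : ℝ)⁻¹ * l) := by
    rw [Rat.inv_cast_eq_den_mul_inv_num]
    push_cast
    field_simp
  refine (commensurable1_apply_iff (PreQLat.scaled ((r : ℝ)⁻¹ * l) σ₁) (PreQLat.scaled l σ₂) x
    (a := (r : ℝ)⁻¹ * l * q) (b := l * p) (congrArg (scaleHom ((r : ℝ)⁻¹ * l)) hq)
    (congrArg (scaleHom l) hp)).trans ?_
  change _ ∈ zmultiples ((r : ℝ)⁻¹ * l) ⊔ zmultiples l ↔ _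
  rw [Real.zmultiples_inv_ratCast_mul_sup_zmultiples hr, hdiff,
    ratCast_mul_mem_zmultiples_iff (mul_ne_zero (inv_ne_zero hnum) hl),
    AddMonoidHom.smul_apply, AddMonoidHom.smul_apply, ← hq, ← hp, ← QuotientAddGroup.mk_zsmul,
    ← QuotientAddGroup.mk_zsmul, QuotientAddGroup.eq, zsmul_eq_mul, zsmul_eq_mul, Int.cast_natCast]

/-- `η(r, ρ) = ((r⁻¹ℤ, r⁻¹(rρ)), (ℤ, ρ))` maps `G = {(r, ρ) ∈ ℚ₊ˣ × R : rρ ∈ R}` to pairs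
of commensurable 1-dimensional `ℚ`-lattices, and induces a bijection from `G` onto the
quotient of the set of pairs of commensurable 1-dimensional `ℚ`-lattices by the scaling
action of `ℝ₊ˣ`. -/
theorem eta_bijection_commensurable_pairs_mod_scaling :
    (∀ (r : ℚ) (ρ rρ : QZ →+ QZ), 0 < r → IsRatSMul r ρ rρ →
      IsQLat (eta1 r rρ) ∧ IsQLat (eta2 ρ) ∧ Commensurable1 (eta1 r rρ) (eta2 ρ)) ∧
    (∀ (r r' : ℚ) (ρ ρ' rρ rρ' : QZ →+ QZ), 0 < r → 0 < r' →
      IsRatSMul r ρ rρ → IsRatSMul r' ρ' rρ' →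
      (∃ c : ℝ, 0 < c ∧ ScaleRel c (eta1 r rρ) (eta1 r' rρ') ∧
        ScaleRel c (eta2 ρ) (eta2 ρ')) →
      r = r' ∧ ρ = ρ') ∧
    (∀ L₁ L₂ : PreQLat, IsQLat L₁ → IsQLat L₂ → Commensurable1 L₁ L₂ →
      ∃ (r : ℚ) (ρ rρ : QZ →+ QZ), 0 < r ∧ IsRatSMul r ρ rρ ∧
        ∃ c : ℝ, 0 < c ∧ ScaleRel c (eta1 r rρ) L₁ ∧ ScaleRel c (eta2 ρ) L₂) := by
  refine ⟨fun r ρ rρ hr ⟨τ, hρ, hrρ⟩ ↦ ?_, fun r r' ρ ρ' rρ rρ' hr hr' _ _ ⟨c, hc, h₁, h₂⟩ ↦ ?_,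
    fun L₁ L₂ h₁ h₂ hL ↦ ?_⟩
  · refine ⟨isQLat_scaled (by positivity) rρ, isQLat_scaled one_ne_zero ρ, ?_⟩
    have hcomm := (commensurable_scaled_iff one_ne_zero hr.ne' (σ₁ := rρ) (σ₂ := ρ)).2 (by
      rw [hρ, hrρ, ← natCast_zsmul, smul_comm])
    rwa [mul_one] at hcomm
  · obtain ⟨hc₁, rfl⟩ := h₂.scaled_eq (by rwa [mul_one]) one_pos
    obtain rfl : c = 1 := by linarith
    obtain ⟨hr_eq, rfl⟩ := h₁.scaled_eq (by rw [one_mul]; positivity) (by positivity)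
    rw [one_mul, inv_inj, Rat.cast_inj] at hr_eq
    exact ⟨hr_eq.symm, rfl⟩
  · obtain ⟨l₁, hl₁, σ₁, rfl⟩ := h₁.exists_eq_scaled
    obtain ⟨l₂, hl₂, σ₂, rfl⟩ := h₂.exists_eq_scaled
    obtain ⟨r, hr, rfl⟩ := Real.exists_rat_eq_inv_mul_of_span_eq hl₁ hl₂ hL.1
    obtain ⟨τ, hσ₁, hσ₂⟩ := exists_zsmul_eq_of_zsmul_eq r.isCoprime_den_num
      ((commensurable_scaled_iff hl₂.ne' hr.ne').1 hL)
    refine ⟨r, σ₂, σ₁, hr, ⟨τ, by rw [hσ₂, natCast_zsmul], hσ₁⟩, l₂, hl₂, ?_, ?_⟩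
    · have h := scaleRel_scaled l₂ (r : ℝ)⁻¹ σ₁
      rwa [mul_comm] at h
    · have h := scaleRel_scaled l₂ 1 σ₂
      rwa [mul_one] at h
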